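/- arXiv:2001.08537 — 3 statements merged into one kernel-verified Lean document; each statement's English description precedes it below -/
import Mathlib

section
/- Let V be a d×n real matrix with columns v_1,…,v_n, let s be an integer with 1 ≤ s ≤ d, and let x ∈ [0,1]ⁿ with ∑_{i=1}^n x_i = s. Let λ₁ ≥ ⋯ ≥ λ_d ≥ 0 be the eigenvalues of X = ∑_{i=1}^n x_i v_i v_iᵀ, assume λ_s > 0, and let k = k(λ,s). Then ∑_{i=1}^k 1/λ_i + (s−k)²/(∑_{i=k+1}^d λ_i) ≥ E_{s−1}(λ)/E_s(λ); that is, Φ_s(X) ≥ E_{s−1}(λ)/E_s(λ). -/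
open Matrix Finset

noncomputable section

/-- `lam` lists the eigenvalues (with multiplicity) of the real symmetric matrix `X`,
via an orthogonal spectral decomposition. -/
def IsSpectralDecomp {m : Type*} [Fintype m] [DecidableEq m]
    (X : Matrix m m ℝ) (lam : m → ℝ) : Prop :=
  ∃ Q : Matrix m m ℝ, Q * Qᵀ = 1 ∧ X = Q * Matrix.diagonal lam * Qᵀ

/-- Principal submatrix `C_{S,S}`. -/
def subSub {n : ℕ} (C : Matrix (Fin n) (Fin n) ℝ) (S : Finset (Fin n)) :
    Matrix {i // i ∈ S} {i // i ∈ S} ℝ :=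
  Matrix.of fun a b => C a.1 b.1

/-- The value `λ_{i+1}` (1-based), i.e. the coordinate of `lam` of 0-based index `i`;
`0` when out of range. -/
def extVal {d : ℕ} (lam : Fin d → ℝ) : ℕ → ℝ :=
  fun i => if h : i < d then lam ⟨i, h⟩ else 0

/-- `∑_{i=k+1}^d λ_i` (1-based), i.e. the sum of the coordinates of 0-based index `≥ k`. -/
def tailSum {d : ℕ} (lam : Fin d → ℝ) (k : ℕ) : ℝ :=
  ∑ i ∈ Finset.univ.filter (fun i : Fin d => k ≤ (i : ℕ)), lam i

/-- `k = k(λ, s)`: an integer `0 ≤ k < s` with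
`λ_k > (1/(s-k)) ∑_{i=k+1}^d λ_i ≥ λ_{k+1}`, with the convention `λ₀ = +∞`. -/
def IsKIndex {d : ℕ} (lam : Fin d → ℝ) (s k : ℕ) : Prop :=
  k < s ∧ extVal lam k ≤ tailSum lam k / ((s : ℝ) - k) ∧
    (k = 0 ∨ tailSum lam k / ((s : ℝ) - k) < extVal lam (k - 1))

/-- `P` is the Moore–Penrose pseudoinverse of `X`. -/
def IsPseudoInv {d : ℕ} (X P : Matrix (Fin d) (Fin d) ℝ) : Prop :=
  X * P * X = X ∧ P * X * P = P ∧ (X * P)ᵀ = X * P ∧ (P * X)ᵀ = P * X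

/-!
Write `A` for the indices `i < k`, `B` for the others, `t = s - k` and `τ = ∑_{i ∈ B} λᵢ`.
An `(s-1)`-subset of indices either misses some `i ∈ A`, and `λᵢ` times the sum of those terms
of `E_{s-1}` is at most `E_s`, or it contains `A`, and those terms add up to
`∏_A λ · e_{t-1}(λ_B)`. The choice of `k` gives `λⱼ ≤ τ / t` on `B`; counting the pairs `(T, j)`
with `|T| = t - 1` and `j ∈ B \ T` then yields `τ e_{t-1}(λ_B) ≤ t² e_t(λ_B)`, and
`∏_A λ · e_t(λ_B) ≤ E_s`.
-/

section Esymm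

variable {ι R : Type*}

/-- `E_m` of the family `(f i)_{i ∈ S}`. -/
def esymmOn [CommSemiring R] (f : ι → R) (S : Finset ι) (m : ℕ) : R :=
  ∑ T ∈ S.powersetCard m, ∏ i ∈ T, f i

theorem esymmOn_nonneg [CommSemiring R] [PartialOrder R] [IsOrderedRing R] {f : ι → R}
    {S : Finset ι} (hf : ∀ i ∈ S, 0 ≤ f i) (m : ℕ) : 0 ≤ esymmOn f S m :=
  sum_nonneg fun _ hT => prod_nonneg fun i hi => hf i ((mem_powersetCard.1 hT).1 hi)

theorem sum_sdiff_mul_prod_powersetCard [DecidableEq ι] [CommSemiring R] (f : ι → R)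
    (S : Finset ι) (m : ℕ) :
    ∑ T ∈ S.powersetCard m, (∑ i ∈ S \ T, f i) * ∏ j ∈ T, f j
      = (m + 1) * esymmOn f S (m + 1) := by
  have hU : ∀ U ∈ S.powersetCard (m + 1),
      ((m : R) + 1) * ∏ j ∈ U, f j = ∑ i ∈ U, f i * ∏ j ∈ U.erase i, f j := by
    intro U hU
    rw [sum_congr rfl fun i hi => mul_prod_erase U f hi, sum_const, (mem_powersetCard.1 hU).2,
      nsmul_eq_mul]
    push_cast
    ring
  simp only [esymmOn, mul_sum, sum_congr rfl hU, sum_mul]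
  -- pairs `(T, i)` with `i ∉ T` match pairs `(U, i)` with `i ∈ U` via `U = insert i T`
  rw [sum_sigma', sum_sigma']
  refine sum_bij' (fun p _ => ⟨insert p.2 p.1, p.2⟩) (fun p _ => ⟨p.1.erase p.2, p.2⟩)
    ?_ ?_ ?_ ?_ ?_
  · rintro ⟨T, i⟩ hp
    simp only [mem_sigma, mem_powersetCard, mem_sdiff] at hp ⊢
    obtain ⟨⟨hTS, rfl⟩, hiS, hiT⟩ := hp
    exact ⟨⟨insert_subset hiS hTS, card_insert_of_notMem hiT⟩, mem_insert_self _ _⟩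
  · rintro ⟨U, i⟩ hp
    simp only [mem_sigma, mem_powersetCard, mem_sdiff] at hp ⊢
    obtain ⟨⟨hUS, hUc⟩, hi⟩ := hp
    exact ⟨⟨(erase_subset _ _).trans hUS, by rw [card_erase_of_mem hi, hUc]; rfl⟩,
      hUS hi, notMem_erase _ _⟩
  · rintro ⟨T, i⟩ hp
    simp [erase_insert (mem_sdiff.1 (mem_sigma.1 hp).2).2]
  · rintro ⟨U, i⟩ hp
    simp [insert_erase (mem_sigma.1 hp).2]
  · rintro ⟨T, i⟩ hp
    simp [erase_insert (mem_sdiff.1 (mem_sigma.1 hp).2).2]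

theorem sum_mul_esymmOn_le [DecidableEq ι] [CommSemiring R] [PartialOrder R] [IsOrderedRing R]
    {f : ι → R} {S : Finset ι} {c : R} (hf0 : ∀ i ∈ S, 0 ≤ f i) (hfc : ∀ i ∈ S, f i ≤ c) (m : ℕ) :
    (∑ i ∈ S, f i) * esymmOn f S m ≤ m * c * esymmOn f S m + (m + 1) * esymmOn f S (m + 1) := by
  have hsplit : ∀ T ∈ S.powersetCard m, (∑ i ∈ S, f i) * ∏ j ∈ T, f j
      = (∑ i ∈ T, f i) * ∏ j ∈ T, f j + (∑ i ∈ S \ T, f i) * ∏ j ∈ T, f j := fun T hT => by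
    rw [← sum_sdiff (mem_powersetCard.1 hT).1]
    ring
  have hsmall : ∀ T ∈ S.powersetCard m,
      (∑ i ∈ T, f i) * ∏ j ∈ T, f j ≤ m * c * ∏ j ∈ T, f j := by
    intro T hT
    obtain ⟨hTS, hTc⟩ := mem_powersetCard.1 hT
    gcongr
    · exact prod_nonneg fun i hi => hf0 i (hTS hi)
    · simpa [hTc] using sum_le_card_nsmul T f c fun i hi => hfc i (hTS hi)
  rw [← sum_sdiff_mul_prod_powersetCard, esymmOn, mul_sum, mul_sum, sum_congr rfl hsplit,
    sum_add_distrib]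
  exact add_le_add_left (sum_le_sum hsmall) _

theorem esymmOn_le_div_mul_esymmOn_succ [DecidableEq ι] [Field R] [LinearOrder R]
    [IsStrictOrderedRing R] {f : ι → R} {S : Finset ι} {r : ℕ} (hf0 : ∀ i ∈ S, 0 ≤ f i)
    (hτ : 0 < ∑ i ∈ S, f i) (hfτ : ∀ i ∈ S, f i ≤ (∑ j ∈ S, f j) / (r + 1)) :
    esymmOn f S r ≤ (r + 1) ^ 2 / (∑ i ∈ S, f i) * esymmOn f S (r + 1) := by
  have h := sum_mul_esymmOn_le hf0 hfτ r
  rw [div_mul_eq_mul_div, le_div_iff₀ hτ]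
  have hr : (0 : R) < r + 1 := by positivity
  field_simp at h
  nlinarith

theorem sum_filter_superset_prod_eq_prod_mul_esymmOn [DecidableEq ι] [CommSemiring R]
    (f : ι → R) {A B : Finset ι} (hAB : Disjoint A B) (m : ℕ) :
    ∑ T ∈ (A ∪ B).powersetCard (#A + m) with A ⊆ T, ∏ i ∈ T, f i
      = (∏ i ∈ A, f i) * esymmOn f B m := by
  rw [esymmOn, mul_sum]
  symm
  refine sum_nbij' (A ∪ ·) (· \ A) ?_ ?_ ?_ ?_ ?_
  · intro U hU
    obtain ⟨hUB, rfl⟩ := mem_powersetCard.1 hU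
    simp only [mem_filter, mem_powersetCard]
    exact ⟨⟨union_subset_union_right hUB, card_union_of_disjoint (hAB.mono_right hUB)⟩,
      subset_union_left⟩
  · intro T hT
    simp only [mem_filter, mem_powersetCard] at hT
    obtain ⟨⟨hTAB, hTc⟩, hAT⟩ := hT
    rw [mem_powersetCard]
    refine ⟨?_, by rw [card_sdiff_of_subset hAT, hTc]; omega⟩
    intro i hi
    obtain ⟨hiT, hiA⟩ := mem_sdiff.1 hi
    exact (mem_union.1 (hTAB hiT)).resolve_left hiA
  · intro U hU
    exact union_sdiff_cancel_left (hAB.mono_right (mem_powersetCard.1 hU).1)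
  · intro T hT
    exact union_sdiff_of_subset (mem_filter.1 hT).2
  · intro U hU
    rw [prod_union (hAB.mono_right (mem_powersetCard.1 hU).1)]

theorem prod_mul_esymmOn_le [DecidableEq ι] [CommSemiring R] [PartialOrder R] [IsOrderedRing R]
    {f : ι → R} {A B : Finset ι} (hf : ∀ i ∈ A ∪ B, 0 ≤ f i) (hAB : Disjoint A B) (m : ℕ) :
    (∏ i ∈ A, f i) * esymmOn f B m ≤ esymmOn f (A ∪ B) (#A + m) := by
  rw [← sum_filter_superset_prod_eq_prod_mul_esymmOn f hAB, esymmOn]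
  exact sum_le_sum_of_subset_of_nonneg (filter_subset _ _) fun T hT _ =>
    prod_nonneg fun i hi => hf i ((mem_powersetCard.1 hT).1 hi)

theorem mul_esymmOn_erase_le [DecidableEq ι] [CommSemiring R] [PartialOrder R] [IsOrderedRing R]
    {f : ι → R} {S : Finset ι} (hf : ∀ i ∈ S, 0 ≤ f i) {i : ι} (hi : i ∈ S) (m : ℕ) :
    f i * esymmOn f (S.erase i) m ≤ esymmOn f S (m + 1) := by
  have h := prod_mul_esymmOn_le (A := {i}) (B := S.erase i) (f := f) (m := m)
    (by rwa [singleton_union, insert_erase hi]) (disjoint_singleton_left.2 (notMem_erase i S))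
  rwa [prod_singleton, singleton_union, insert_erase hi, card_singleton, add_comm] at h

theorem esymmOn_le_sum_esymmOn_erase_add [DecidableEq ι] [CommSemiring R] [PartialOrder R]
    [IsOrderedRing R] {f : ι → R} {S : Finset ι} (hf : ∀ i ∈ S, 0 ≤ f i) (A : Finset ι) (m : ℕ) :
    esymmOn f S m ≤ ∑ i ∈ A, esymmOn f (S.erase i) m
      + ∑ T ∈ S.powersetCard m with A ⊆ T, ∏ i ∈ T, f i := by
  have herase : ∀ i,
      esymmOn f (S.erase i) m = ∑ T ∈ S.powersetCard m with i ∉ T, ∏ j ∈ T, f j := by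
    intro i
    rw [esymmOn]
    congr 1
    ext T
    simp only [mem_powersetCard, mem_filter, subset_erase]
    tauto
  have hmiss : ∑ T ∈ S.powersetCard m with ¬A ⊆ T, ∏ j ∈ T, f j
      ≤ ∑ T ∈ S.powersetCard m, ∑ i ∈ A with i ∉ T, ∏ j ∈ T, f j := by
    rw [sum_filter]
    refine sum_le_sum fun T hT => ?_
    have hT0 : 0 ≤ ∏ j ∈ T, f j := prod_nonneg fun j hj => hf j ((mem_powersetCard.1 hT).1 hj)
    split_ifs with hAT
    · exact sum_nonneg fun _ _ => hT0
    · obtain ⟨i, hiA, hiT⟩ := not_subset.1 hAT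
      exact single_le_sum (f := fun _ => ∏ j ∈ T, f j) (fun _ _ => hT0) (mem_filter.2 ⟨hiA, hiT⟩)
  simp only [herase, sum_filter]
  rw [sum_comm, esymmOn, ← sum_filter_add_sum_filter_not _ (A ⊆ ·), add_comm]
  simpa only [sum_filter] using add_le_add_left hmiss _

theorem esymmOn_le_mul_esymmOn_succ [DecidableEq ι] [Field R] [LinearOrder R]
    [IsStrictOrderedRing R] {f : ι → R} {A B : Finset ι} (hAB : Disjoint A B)
    (hA : ∀ i ∈ A, 0 < f i) (hB : ∀ i ∈ B, 0 ≤ f i) (hτ : 0 < ∑ i ∈ B, f i) {r : ℕ}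
    (hfB : ∀ i ∈ B, f i ≤ (∑ j ∈ B, f j) / (r + 1)) :
    esymmOn f (A ∪ B) (#A + r)
      ≤ (∑ i ∈ A, 1 / f i + (r + 1) ^ 2 / ∑ i ∈ B, f i) * esymmOn f (A ∪ B) (#A + r + 1) := by
  have hf : ∀ i ∈ A ∪ B, 0 ≤ f i := fun i hi =>
    (mem_union.1 hi).elim (fun hi => (hA i hi).le) (hB i)
  set E := esymmOn f (A ∪ B) (#A + r + 1)
  have hmiss : ∀ i ∈ A, esymmOn f ((A ∪ B).erase i) (#A + r) ≤ 1 / f i * E := fun i hi => by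
    rw [one_div, inv_mul_eq_div, le_div_iff₀ (hA i hi), mul_comm]
    exact mul_esymmOn_erase_le hf (mem_union_left B hi) _
  have hcontain : (∏ i ∈ A, f i) * esymmOn f B r ≤ (r + 1) ^ 2 / (∑ i ∈ B, f i) * E :=
    calc (∏ i ∈ A, f i) * esymmOn f B r
        ≤ (∏ i ∈ A, f i) * ((r + 1) ^ 2 / (∑ i ∈ B, f i) * esymmOn f B (r + 1)) := by
          gcongr
          · exact prod_nonneg fun i hi => (hA i hi).le
          · exact esymmOn_le_div_mul_esymmOn_succ hB hτ hfB
      _ = (r + 1) ^ 2 / (∑ i ∈ B, f i) * ((∏ i ∈ A, f i) * esymmOn f B (r + 1)) := by ring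
      _ ≤ _ := by
          gcongr
          exact prod_mul_esymmOn_le hf hAB _
  calc esymmOn f (A ∪ B) (#A + r)
      ≤ ∑ i ∈ A, esymmOn f ((A ∪ B).erase i) (#A + r) + (∏ i ∈ A, f i) * esymmOn f B r := by
        rw [← sum_filter_superset_prod_eq_prod_mul_esymmOn f hAB]
        exact esymmOn_le_sum_esymmOn_erase_add hf A _
    _ ≤ ∑ i ∈ A, 1 / f i * E + (r + 1) ^ 2 / (∑ i ∈ B, f i) * E :=
        add_le_add (sum_le_sum hmiss) hcontain
    _ = _ := by rw [← sum_mul, add_mul]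

end Esymm

theorem lt_of_extVal_pos {d : ℕ} {lam : Fin d → ℝ} {j : ℕ} (h : 0 < extVal lam j) : j < d := by
  by_contra hj
  simp [extVal, hj] at h

theorem Antitone.pos_of_extVal_pos {d : ℕ} {lam : Fin d → ℝ} (hsort : Antitone lam) {j : ℕ}
    (h : 0 < extVal lam j) {i : Fin d} (hi : (i : ℕ) ≤ j) : 0 < lam i := by
  have hj := lt_of_extVal_pos h
  rw [extVal, dif_pos hj] at h
  exact h.trans_le (hsort (show i ≤ ⟨j, hj⟩ from hi))

theorem IsKIndex.le_tailSum_div {d s k : ℕ} {lam : Fin d → ℝ} (hk : IsKIndex lam s k)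
    (hsort : Antitone lam) {i : Fin d} (hi : k ≤ (i : ℕ)) :
    lam i ≤ tailSum lam k / ((s : ℝ) - k) := by
  have hkd : k < d := hi.trans_lt i.2
  have h := hk.2.1
  rw [extVal, dif_pos hkd] at h
  exact (hsort (show (⟨k, hkd⟩ : Fin d) ≤ i from hi)).trans h

theorem stmt_16_general (d s : ℕ)
    (lam : Fin d → ℝ) (hsort : Antitone lam) (hnn : ∀ i, 0 ≤ lam i)
    (hlams : 0 < extVal lam (s - 1))
    (k : ℕ) (hk : IsKIndex lam s k) :
    (∑ T ∈ (Finset.univ : Finset (Fin d)).powersetCard (s - 1), ∏ i ∈ T, lam i) /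
        (∑ T ∈ (Finset.univ : Finset (Fin d)).powersetCard s, ∏ i ∈ T, lam i)
      ≤ (∑ i ∈ Finset.univ.filter (fun i : Fin d => (i : ℕ) < k), 1 / lam i)
        + ((s : ℝ) - k) ^ 2 / tailSum lam k := by
  obtain ⟨r, rfl⟩ : ∃ r, s = k + r + 1 := ⟨s - k - 1, by have := hk.1; omega⟩
  set A := (univ : Finset (Fin d)).filter (fun i : Fin d => (i : ℕ) < k)
  set B := (univ : Finset (Fin d)).filter (fun i : Fin d => k ≤ (i : ℕ))
  have hkr : k + r < d := by simpa using lt_of_extVal_pos hlams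
  have hcardA : #A = k := by simp only [A, Fin.card_filter_val_lt]; omega
  have hAB : A ∪ B = univ := by ext i; simp [A, B, lt_or_ge]
  have hdisj : Disjoint A B := disjoint_filter.2 fun i _ h => not_le.2 h
  have hcast : ((k + r + 1 : ℕ) : ℝ) - k = r + 1 := by push_cast; ring
  have hτ : 0 < ∑ i ∈ B, lam i :=
    (hsort.pos_of_extVal_pos hlams (i := ⟨k + r, hkr⟩) le_rfl).trans_le
      (single_le_sum (fun i _ => hnn i) (by simp [B]))
  have hcore := esymmOn_le_mul_esymmOn_succ hdisj
    (fun i hi => hsort.pos_of_extVal_pos hlams (by have := (mem_filter.1 hi).2; omega))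
    (fun i _ => hnn i) hτ (r := r)
    (fun i hi => hcast ▸ hk.le_tailSum_div hsort (mem_filter.1 hi).2)
  rw [hAB, hcardA] at hcore
  rw [Nat.add_sub_cancel, hcast]
  exact div_le_of_le_mul₀ (esymmOn_nonneg (fun i _ => hnn i) _)
    (add_nonneg (sum_nonneg fun i _ => one_div_nonneg.2 (hnn i)) (div_nonneg (sq_nonneg _) hτ.le))
    hcore

/-- For feasible `x` with `λ_s(X) > 0`,
`Φ_s(X) = ∑_{i≤k} 1/λᵢ + (s−k)²/∑_{i>k} λᵢ ≥ E_{s−1}(λ)/E_s(λ)`. -/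
theorem stmt_16 (d n s : ℕ) (hs1 : 1 ≤ s) (hsd : s ≤ d)
    (V : Matrix (Fin d) (Fin n) ℝ)
    (x : Fin n → ℝ) (hx0 : ∀ i, 0 ≤ x i) (hx1 : ∀ i, x i ≤ 1) (hxs : ∑ i, x i = s)
    (lam : Fin d → ℝ) (hsort : Antitone lam) (hnn : ∀ i, 0 ≤ lam i)
    (hdecomp : IsSpectralDecomp
      (∑ i, x i • vecMulVec (fun a => V a i) (fun a => V a i)) lam)
    (hlams : 0 < extVal lam (s - 1))
    (k : ℕ) (hk : IsKIndex lam s k) :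
    (∑ T ∈ (Finset.univ : Finset (Fin d)).powersetCard (s - 1), ∏ i ∈ T, lam i) /
        (∑ T ∈ (Finset.univ : Finset (Fin d)).powersetCard s, ∏ i ∈ T, lam i)
      ≤ (∑ i ∈ Finset.univ.filter (fun i : Fin d => (i : ℕ) < k), 1 / lam i)
        + ((s : ℝ) - k) ^ 2 / tailSum lam k :=
  stmt_16_general d s lam hsort hnn hlams k hk
end
end

section
/- Let V be a d×n real matrix with columns v_1,…,v_n, s an integer with 1 ≤ s ≤ d, and Ŝ ⊆ {1,…,n} with |Ŝ| = s such that {v_ℓ}_{ℓ∈Ŝ} are linearly independent. Let X = ∑_{ℓ∈Ŝ} v_ℓ v_ℓᵀ and let P be the Moore–Penrose pseudoinverse of X. Suppose Ŝ is locally optimal for A-MESP: for every i ∈ Ŝ and j ∈ {1,…,n}∖Ŝ with T = Ŝ∪{j}∖{i}, if the Gram matrix G_T of {v_ℓ}_{ℓ∈T} is nonsingular then tr(G_T^{-1}) ≥ tr(G_Ŝ^{-1}). Then for every i ∈ Ŝ and j ∈ {1,…,n}∖Ŝ: (v_iᵀ P³ v_i) · v_jᵀ (I_d − P X) v_j ≤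 v_iᵀ P² v_i + (v_iᵀ P² v_i)·(v_jᵀ P v_j) − 2·(v_iᵀ P² v_j)·(v_iᵀ P v_j). -/
open Matrix Finset

noncomputable section

/-!
Let `U` be the matrix of the columns indexed by `Ŝ`, `G = UᵀU`, `A = G⁻¹`, so that `X = UUᵀ`
and `P = UA²Uᵀ`. Write `v_j = Uq + r` with `Uᵀr = 0`. Every quantity in the inequality is a
quadratic form in `A`, because `(Ux + r)ᵀ P^(n+1) (Uy + r') = xᵀ Aⁿ y`, while
`v_jᵀ(I - PX)v_j = |r|²`. Exchanging column `i` for `v_j` replaces the Gram matrix by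
`EᵀGE + |r|² e eᵀ` with `e = e_i` and `E = I + (q - e)eᵀ`. When `δ = (eᵀq)² + |r|² eᵀAe ≠ 0`
this matrix has an explicit inverse, a rank-two correction of `A`, whose trace exceeds `tr A`
by exactly `δ⁻¹` times the difference of the two sides of the inequality, so local optimality
makes that difference nonnegative. When `δ = 0`, both `eᵀq` and `r` vanish and the inequality
is trivial.
-/

theorem IsPseudoInv.unique {d : ℕ} {X P Q : Matrix (Fin d) (Fin d) ℝ}
    (hP : IsPseudoInv X P) (hQ : IsPseudoInv X Q) : P = Q := by
  obtain ⟨hXPX, hPXP, hXP, hPX⟩ := hP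
  obtain ⟨hXQX, hQXQ, hXQ, hQX⟩ := hQ
  have hXP_eq : X * P = X * Q :=
    calc X * P = (X * Q * (X * P))ᵀ := by rw [← Matrix.mul_assoc, hXQX, hXP]
      _ = X * P * (X * Q) := by rw [transpose_mul, hXP, hXQ]
      _ = X * Q := by rw [← Matrix.mul_assoc, hXPX]
  have hPX_eq : P * X = Q * X :=
    calc P * X = (P * X * (Q * X))ᵀ := by rw [Matrix.mul_assoc, ← Matrix.mul_assoc X, hXQX, hPX]
      _ = Q * X * (P * X) := by rw [transpose_mul, hPX, hQX]
      _ = Q * X := by rw [Matrix.mul_assoc, ← Matrix.mul_assoc X, hXPX]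
  calc P = Q * X * P := by rw [← hPX_eq, hPXP]
    _ = Q := by rw [Matrix.mul_assoc, hXP_eq, ← Matrix.mul_assoc, hQXQ]

section ColumnSpace

variable {m ι κ : Type*} [Fintype m] [Fintype ι] [DecidableEq ι]
  {U : Matrix m ι ℝ} {A : Matrix ι ι ℝ}

theorem exists_mulVec_add_of_mul_eq_one (hGA : Uᵀ * U * A = 1) (w : m → ℝ) :
    ∃ q r, Uᵀ *ᵥ r = 0 ∧ w = U *ᵥ q + r := by
  refine ⟨A *ᵥ (Uᵀ *ᵥ w), w - U *ᵥ (A *ᵥ (Uᵀ *ᵥ w)), ?_, by abel⟩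
  rw [mulVec_sub, mulVec_mulVec, mulVec_mulVec, hGA, one_mulVec, sub_self]

theorem transpose_mul_mul_cancel_left (hGA : Uᵀ * U * A = 1) (M : Matrix ι κ ℝ) :
    Uᵀ * (U * (A * M)) = M := by
  rw [← Matrix.mul_assoc, ← Matrix.mul_assoc, hGA, Matrix.one_mul]

theorem mul_transpose_mul_cancel_left (hGA : Uᵀ * U * A = 1) (M : Matrix ι κ ℝ) :
    A * (Uᵀ * (U * M)) = M := by
  rw [← Matrix.mul_assoc, ← Matrix.mul_assoc, Matrix.mul_assoc A, mul_eq_one_comm.mp hGA,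
    Matrix.one_mul]

theorem pinv_mul_self (hGA : Uᵀ * U * A = 1) : U * (A * A) * Uᵀ * U = U * A := by
  simp only [Matrix.mul_assoc, mul_eq_one_comm.mp hGA, Matrix.mul_one]

variable [DecidableEq m]

theorem pinv_pow_succ_mulVec (hGA : Uᵀ * U * A = 1) (n : ℕ) (y : ι → ℝ) {r : m → ℝ}
    (hr : Uᵀ *ᵥ r = 0) :
    (U * (A * A) * Uᵀ) ^ (n + 1) *ᵥ (U *ᵥ y + r) = U *ᵥ (A ^ (n + 1) *ᵥ y) := by
  have hPU : ∀ z, (U * (A * A) * Uᵀ) *ᵥ (U *ᵥ z) = U *ᵥ (A *ᵥ z) := fun z => by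
    rw [mulVec_mulVec, pinv_mul_self hGA, mulVec_mulVec]
  induction n with
  | zero =>
    rw [zero_add, pow_one, pow_one, mulVec_add, hPU, ← mulVec_mulVec, hr, mulVec_zero, add_zero]
  | succ n ih => rw [pow_succ', ← mulVec_mulVec, ih, hPU, pow_succ' A (n + 1), ← mulVec_mulVec]

theorem dotProduct_pinv_pow_succ_mulVec (hGA : Uᵀ * U * A = 1) (n : ℕ) (x y : ι → ℝ)
    {r r' : m → ℝ} (hr : Uᵀ *ᵥ r = 0) (hr' : Uᵀ *ᵥ r' = 0) :
    (U *ᵥ x + r) ⬝ᵥ (U * (A * A) * Uᵀ) ^ (n + 1) *ᵥ (U *ᵥ y + r') = x ⬝ᵥ A ^ n *ᵥ y := by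
  rw [pinv_pow_succ_mulVec hGA n y hr', add_dotProduct, dotProduct_mulVec r, ← mulVec_transpose,
    hr, zero_dotProduct, add_zero, dotProduct_comm, dotProduct_mulVec, ← mulVec_transpose,
    dotProduct_comm, mulVec_mulVec, mulVec_mulVec, pow_succ', ← Matrix.mul_assoc, hGA,
    Matrix.one_mul]

theorem one_sub_pinv_mul_mulVec (hGA : Uᵀ * U * A = 1) (y : ι → ℝ) {r : m → ℝ}
    (hr : Uᵀ *ᵥ r = 0) : (1 - U * (A * A) * Uᵀ * (U * Uᵀ)) *ᵥ (U *ᵥ y + r) = r := by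
  have hPXU : U * (A * A) * Uᵀ * (U * Uᵀ) * U = U := by
    simp only [Matrix.mul_assoc, mul_transpose_mul_cancel_left hGA, mul_eq_one_comm.mp hGA,
      Matrix.mul_one]
  have hPXr : (U * (A * A) * Uᵀ * (U * Uᵀ)) *ᵥ r = 0 := by
    rw [← mulVec_mulVec, ← mulVec_mulVec r U, hr, mulVec_zero, mulVec_zero]
  rw [sub_mulVec, one_mulVec, mulVec_add, mulVec_mulVec, hPXU, hPXr, add_zero, add_sub_cancel_left]

end ColumnSpace

theorem isPseudoInv_mul_transpose {d : ℕ} {ι : Type*} [Fintype ι] [DecidableEq ι]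
    {U : Matrix (Fin d) ι ℝ} {A : Matrix ι ι ℝ} (hGA : Uᵀ * U * A = 1) (hA : Aᵀ = A) :
    IsPseudoInv (U * Uᵀ) (U * (A * A) * Uᵀ) := by
  refine ⟨?_, ?_, ?_, ?_⟩ <;>
    simp only [transpose_mul, transpose_transpose, hA, Matrix.mul_assoc,
      transpose_mul_mul_cancel_left hGA, mul_transpose_mul_cancel_left hGA]

section Exchange

variable {ι : Type*} [Fintype ι] [DecidableEq ι]

def exchangeGram (G : Matrix ι ι ℝ) (e q : ι → ℝ) (h : ℝ) : Matrix ι ι ℝ :=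
  (1 + vecMulVec e (q - e)) * G * (1 + vecMulVec (q - e) e) + h • vecMulVec e e

variable {G A : Matrix ι ι ℝ} {e : ι → ℝ}

theorem exchangeGram_eq (hG : Gᵀ = G) (q : ι → ℝ) (h : ℝ) :
    exchangeGram G e q h = G + vecMulVec (G *ᵥ (q - e)) e + vecMulVec e (G *ᵥ (q - e))
      + ((q - e) ⬝ᵥ G *ᵥ (q - e) + h) • vecMulVec e e := by
  rw [exchangeGram]
  set t := q - e
  have htG : t ᵥ* G = G *ᵥ t := by rw [← mulVec_transpose, hG]
  simp only [add_mul, mul_add, Matrix.mul_one, Matrix.one_mul, mul_vecMulVec,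
    vecMulVec_mul, htG, vecMulVec_mulVec, op_smul_eq_smul, smul_vecMulVec, add_smul]
  rw [dotProduct_comm]
  abel

theorem exchangeGram_mul_eq_one (hGA : G * A = 1) (hG : Gᵀ = G) (hA : Aᵀ = A)
    (he : e ⬝ᵥ e = 1) (q : ι → ℝ) (h : ℝ)
    (hd : (e ⬝ᵥ q) ^ 2 + h * (e ⬝ᵥ A *ᵥ e) ≠ 0) :
    exchangeGram G e q h * (A + ((e ⬝ᵥ q) ^ 2 + h * (e ⬝ᵥ A *ᵥ e))⁻¹ •
      ((e ⬝ᵥ A *ᵥ e) • vecMulVec (q - e) (q - e) - h • vecMulVec (A *ᵥ e) (A *ᵥ e)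
        - (e ⬝ᵥ q) • (vecMulVec (A *ᵥ e) (q - e) + vecMulVec (q - e) (A *ᵥ e)))) = 1 := by
  rw [exchangeGram_eq hG]
  set t := q - e
  set a := A *ᵥ e
  set b := e ⬝ᵥ a
  set f := e ⬝ᵥ q
  set γ := t ⬝ᵥ G *ᵥ t
  have het : e ⬝ᵥ t = f - 1 := by simp only [t, dotProduct_sub, he, f]
  have hAG : A * G = 1 := mul_eq_one_comm.mp hGA
  have hGa : G *ᵥ a = e := by simp only [a, mulVec_mulVec, hGA, one_mulVec]
  have heA : e ᵥ* A = a := by rw [← mulVec_transpose, hA]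
  have hGtA : (G *ᵥ t) ᵥ* A = t := by
    rw [← mulVec_transpose, hA, mulVec_mulVec, hAG, one_mulVec]
  have hGta : G *ᵥ t ⬝ᵥ a = f - 1 := by
    rw [dotProduct_mulVec, hGtA, dotProduct_comm, het]
  -- `M` maps both `t` and `a` into the span of `G t` and `e`, so `M` times the candidate inverse
  -- is `1` plus four rank-one terms whose coefficients cancel because `f ^ 2 + h * b ≠ 0`.
  set M := G + vecMulVec (G *ᵥ t) e + vecMulVec e (G *ᵥ t) + (γ + h) • vecMulVec e e
  have hMA : M * A = 1 + vecMulVec (G *ᵥ t) a + vecMulVec e t + (γ + h) • vecMulVec e a := by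
    simp only [M, add_mul, smul_mul, vecMulVec_mul, hGA, heA, hGtA]
  have hMt : M *ᵥ t = f • G *ᵥ t + (γ + (γ + h) * (f - 1)) • e := by
    simp only [M, add_mulVec, smul_mulVec, vecMulVec_mulVec, het, op_smul_eq_smul]
    rw [dotProduct_comm (G *ᵥ t)]
    module
  have hMa : M *ᵥ a = b • G *ᵥ t + (f + (γ + h) * b) • e := by
    simp only [M, add_mulVec, smul_mulVec, vecMulVec_mulVec, hGa, hGta, op_smul_eq_smul]
    module
  rw [Matrix.mul_add, Matrix.mul_smul, hMA, Matrix.mul_sub, Matrix.mul_sub, Matrix.mul_smul,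
    Matrix.mul_smul, Matrix.mul_smul, Matrix.mul_add, mul_vecMulVec, mul_vecMulVec,
    mul_vecMulVec, mul_vecMulVec, hMt, hMa]
  ext i j
  simp only [Matrix.add_apply, Matrix.sub_apply, Matrix.smul_apply, vecMulVec_apply,
    Pi.add_apply, Pi.smul_apply, smul_eq_mul, Matrix.one_apply]
  field_simp
  ring

theorem det_exchangeGram_ne_zero (hGA : G * A = 1) (hG : Gᵀ = G) (hA : Aᵀ = A)
    (he : e ⬝ᵥ e = 1) (q : ι → ℝ) (h : ℝ)
    (hd : (e ⬝ᵥ q) ^ 2 + h * (e ⬝ᵥ A *ᵥ e) ≠ 0) : (exchangeGram G e q h).det ≠ 0 :=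
  det_ne_zero_of_right_inverse (exchangeGram_mul_eq_one hGA hG hA he q h hd)

theorem trace_exchangeGram_inv (hGA : G * A = 1) (hG : Gᵀ = G) (hA : Aᵀ = A)
    (he : e ⬝ᵥ e = 1) (q : ι → ℝ) (h : ℝ)
    (hd : (e ⬝ᵥ q) ^ 2 + h * (e ⬝ᵥ A *ᵥ e) ≠ 0) :
    trace (exchangeGram G e q h)⁻¹ = trace A + ((e ⬝ᵥ q) ^ 2 + h * (e ⬝ᵥ A *ᵥ e))⁻¹ *
      ((e ⬝ᵥ A *ᵥ e) * (1 + q ⬝ᵥ q) - h * (e ⬝ᵥ A ^ 2 *ᵥ e)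
        - 2 * (e ⬝ᵥ A *ᵥ q) * (e ⬝ᵥ q)) := by
  have hAA : A *ᵥ e ⬝ᵥ A *ᵥ e = e ⬝ᵥ A ^ 2 *ᵥ e := by
    rw [dotProduct_mulVec, ← mulVec_transpose, hA, sq, mulVec_mulVec, dotProduct_comm]
  have hAq : ∀ x, A *ᵥ e ⬝ᵥ x = e ⬝ᵥ A *ᵥ x := fun x => by
    rw [dotProduct_mulVec, ← mulVec_transpose, hA, dotProduct_comm]
  rw [inv_eq_right_inv (exchangeGram_mul_eq_one hGA hG hA he q h hd)]
  simp only [trace_add, trace_smul, trace_sub, trace_vecMulVec, smul_eq_mul, hAA,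
    sub_dotProduct, dotProduct_sub, mulVec_sub, he, hAq, dotProduct_comm q e,
    dotProduct_comm q (A *ᵥ e)]
  ring

end Exchange

section Gram

variable {m ι : Type*} [Fintype ι] [DecidableEq ι]

theorem updateCol_mulVec_add (U : Matrix m ι ℝ) (k : ι) (q : ι → ℝ) (r : m → ℝ) :
    U.updateCol k (U *ᵥ q + r) =
      U * (1 + vecMulVec (q - Pi.single k 1) (Pi.single k 1)) + vecMulVec r (Pi.single k 1) := by
  rw [Matrix.mul_add, Matrix.mul_one, mul_vecMulVec, add_assoc, ← add_vecMulVec, mulVec_sub,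
    mulVec_single_one]
  ext i c
  rcases eq_or_ne c k with rfl | hc
  · simp only [updateCol_self, Matrix.add_apply, vecMulVec_apply, col_apply, Pi.add_apply,
      Pi.sub_apply, Pi.single_eq_same, mul_one]
    ring
  · simp [updateCol_ne hc, vecMulVec_apply, Pi.single_eq_of_ne hc]

variable [Fintype m]

theorem gram_updateCol (U : Matrix m ι ℝ) (k : ι) (q : ι → ℝ) {r : m → ℝ} (hr : Uᵀ *ᵥ r = 0) :
    (U.updateCol k (U *ᵥ q + r))ᵀ * U.updateCol k (U *ᵥ q + r) =
      exchangeGram (Uᵀ * U) (Pi.single k 1) q (r ⬝ᵥ r) := by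
  rw [updateCol_mulVec_add, exchangeGram]
  set e : ι → ℝ := Pi.single k 1
  set E := 1 + vecMulVec (q - e) e
  have hEt : Eᵀ = 1 + vecMulVec e (q - e) := by
    simp only [E, transpose_add, transpose_one, transpose_vecMulVec]
  have hUEr : (U * E)ᵀ *ᵥ r = 0 := by rw [transpose_mul, ← mulVec_mulVec, hr, mulVec_zero]
  have hrUE : r ᵥ* (U * E) = 0 := by rw [← mulVec_transpose, hUEr]
  clear_value E
  rw [transpose_add, transpose_vecMulVec, Matrix.add_mul, Matrix.mul_add, Matrix.mul_add,
    mul_vecMulVec, hUEr, vecMulVec_mul, hrUE, vecMulVec_mul_vecMulVec, zero_vecMulVec,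
    vecMulVec_zero, vecMulVec_smul, transpose_mul, hEt, Matrix.mul_assoc, Matrix.mul_assoc,
    Matrix.mul_assoc]
  abel

end Gram

theorem le_of_exchange_trace_le {b c f h p ε : ℝ} (hb : 0 < b) (hh : 0 ≤ h) (hc : 0 ≤ c)
    (hopt : f ^ 2 + h * b ≠ 0 → 0 ≤ (f ^ 2 + h * b)⁻¹ * (b * (1 + c) - h * p - 2 * ε * f)) :
    p * h ≤ b + b * c - 2 * ε * f := by
  rcases eq_or_ne (f ^ 2 + h * b) 0 with hd | hd
  · have hf : f = 0 := by nlinarith [sq_nonneg f, mul_nonneg hh hb.le]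
    have hh0 : h = 0 := by nlinarith [sq_nonneg f, mul_nonneg hh hb.le]
    subst hf hh0
    nlinarith [mul_nonneg hb.le hc]
  · have hpos : 0 < f ^ 2 + h * b := lt_of_le_of_ne (by positivity) (Ne.symm hd)
    have := (mul_nonneg_iff_of_pos_left (inv_pos.mpr hpos)).mp (hopt hd)
    linarith

theorem exchange_inequality_of_trace_inv_le {d : ℕ} {ι : Type*} [Fintype ι] [DecidableEq ι]
    {U : Matrix (Fin d) ι ℝ} (hU : LinearIndependent ℝ U.col) {P : Matrix (Fin d) (Fin d) ℝ}
    (hP : IsPseudoInv (U * Uᵀ) P) (k : ι) (w : Fin d → ℝ)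
    (hopt : ((U.updateCol k w)ᵀ * U.updateCol k w).det ≠ 0 →
      trace (Uᵀ * U)⁻¹ ≤ trace ((U.updateCol k w)ᵀ * U.updateCol k w)⁻¹) :
    (U.col k ⬝ᵥ (P * P * P) *ᵥ U.col k) * (w ⬝ᵥ (1 - P * (U * Uᵀ)) *ᵥ w)
      ≤ U.col k ⬝ᵥ (P * P) *ᵥ U.col k + (U.col k ⬝ᵥ (P * P) *ᵥ U.col k) * (w ⬝ᵥ P *ᵥ w)
        - 2 * (U.col k ⬝ᵥ (P * P) *ᵥ w) * (U.col k ⬝ᵥ P *ᵥ w) := by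
  have hG : (Uᵀ * U).PosDef := by
    simpa only [conjTranspose_eq_transpose_of_trivial] using
      PosDef.conjTranspose_mul_self U (mulVec_injective_iff.mpr hU)
  set A := (Uᵀ * U)⁻¹
  have hGA : Uᵀ * U * A = 1 := mul_nonsing_inv _ (isUnit_iff_isUnit_det _ |>.mp hG.isUnit)
  have hGsymm : (Uᵀ * U)ᵀ = Uᵀ * U := by rw [transpose_mul, transpose_transpose]
  have hA : Aᵀ = A := by rw [transpose_nonsing_inv, hGsymm]
  obtain rfl : P = U * (A * A) * Uᵀ := hP.unique (isPseudoInv_mul_transpose hGA hA)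
  obtain ⟨q, r, hr, rfl⟩ := exists_mulVec_add_of_mul_eq_one hGA w
  set P := U * (A * A) * Uᵀ
  set e : ι → ℝ := Pi.single k 1
  have he : e ⬝ᵥ e = 1 := by simp [e]
  have hb : 0 < e ⬝ᵥ A *ᵥ e := by
    simpa using hG.inv.dotProduct_mulVec_pos (x := e) (by simp [e])
  have h0 : Uᵀ *ᵥ (0 : Fin d → ℝ) = 0 := mulVec_zero _
  -- the zero residual puts `U.col k` in the shape of `dotProduct_pinv_pow_succ_mulVec`
  have hu : U.col k = U *ᵥ e + 0 := by rw [add_zero, mulVec_single_one]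
  have huP3u : (U *ᵥ e + 0) ⬝ᵥ P ^ 3 *ᵥ (U *ᵥ e + 0) = e ⬝ᵥ A ^ 2 *ᵥ e :=
    dotProduct_pinv_pow_succ_mulVec hGA 2 e e h0 h0
  have huP2u : (U *ᵥ e + 0) ⬝ᵥ P ^ 2 *ᵥ (U *ᵥ e + 0) = e ⬝ᵥ A *ᵥ e := by
    simpa using dotProduct_pinv_pow_succ_mulVec hGA 1 e e h0 h0
  have huP2w : (U *ᵥ e + 0) ⬝ᵥ P ^ 2 *ᵥ (U *ᵥ q + r) = e ⬝ᵥ A *ᵥ q := by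
    simpa using dotProduct_pinv_pow_succ_mulVec hGA 1 e q h0 hr
  have huPw : (U *ᵥ e + 0) ⬝ᵥ P *ᵥ (U *ᵥ q + r) = e ⬝ᵥ q := by
    simpa using dotProduct_pinv_pow_succ_mulVec hGA 0 e q h0 hr
  have hwPw : (U *ᵥ q + r) ⬝ᵥ P *ᵥ (U *ᵥ q + r) = q ⬝ᵥ q := by
    simpa using dotProduct_pinv_pow_succ_mulVec hGA 0 q q hr hr
  have hproj : (U *ᵥ q + r) ⬝ᵥ (1 - P * (U * Uᵀ)) *ᵥ (U *ᵥ q + r) = r ⬝ᵥ r := by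
    rw [one_sub_pinv_mul_mulVec hGA q hr, add_dotProduct, dotProduct_comm, dotProduct_mulVec,
      ← mulVec_transpose, hr, zero_dotProduct, zero_add]
  rw [hu, ← pow_three' P, ← sq P, huP3u, huP2u, huP2w, huPw, hwPw, hproj]
  rw [gram_updateCol U k q hr] at hopt
  refine le_of_exchange_trace_le hb (by simpa using dotProduct_star_self_nonneg r)
    (by simpa using dotProduct_star_self_nonneg q) fun hd => ?_
  have := hopt (det_exchangeGram_ne_zero hGA hGsymm hA he q _ hd)
  rw [trace_exchangeGram_inv hGA hGsymm hA he q _ hd] at this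
  linarith

theorem trace_inv_submatrix_equiv_self {m n : Type*} [Fintype m] [DecidableEq m] [Fintype n]
    [DecidableEq n] (e : m ≃ n) (M : Matrix n n ℝ) :
    trace (M.submatrix e e)⁻¹ = trace M⁻¹ := by
  rw [inv_submatrix_equiv]
  exact Fintype.sum_equiv e _ _ fun _ => rfl

section Columns

variable {d n : ℕ} (V : Matrix (Fin d) (Fin n) ℝ)

theorem sum_vecMulVec_col_eq (S : Finset (Fin n)) :
    ∑ i ∈ S, vecMulVec (V.col i) (V.col i) =
      V.submatrix id ((↑) : S → Fin n) * (V.submatrix id ((↑) : S → Fin n))ᵀ := by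
  ext a b
  simp only [Matrix.sum_apply, vecMulVec_apply, col_apply, mul_apply, submatrix_apply,
    transpose_apply, id]
  exact (Finset.sum_coe_sort S fun i => V a i * V b i).symm

theorem subSub_transpose_mul (S : Finset (Fin n)) :
    subSub (Vᵀ * V) S = (V.submatrix id ((↑) : S → Fin n))ᵀ * V.submatrix id ((↑) : S → Fin n) :=
  rfl

theorem exists_equiv_subSub_insert_erase {S : Finset (Fin n)} {i j : Fin n} (hi : i ∈ S)
    (hj : j ∉ S) : ∃ τ : S ≃ (insert j (S.erase i) : Finset (Fin n)),
      (subSub (Vᵀ * V) (insert j (S.erase i))).submatrix τ τ =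
        ((V.submatrix id ((↑) : S → Fin n)).updateCol ⟨i, hi⟩ (V.col j))ᵀ *
          (V.submatrix id ((↑) : S → Fin n)).updateCol ⟨i, hi⟩ (V.col j) := by
  have hij : i ≠ j := ne_of_mem_of_not_mem hi hj
  have hmem : ∀ a, a ∈ S ↔ Equiv.swap i j a ∈ insert j (S.erase i) := fun a => by
    rcases eq_or_ne a i with rfl | hai
    · simp [hi]
    rcases eq_or_ne a j with rfl | haj
    · simp [hj, hij]
    · simp [Equiv.swap_apply_of_ne_of_ne hai haj, hai, haj]
  refine ⟨(Equiv.swap i j).subtypeEquiv hmem, ?_⟩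
  have hcol : (V.submatrix id ((↑) : S → Fin n)).updateCol ⟨i, hi⟩ (V.col j) =
      V.submatrix id fun a : S => Equiv.swap i j a := by
    ext x a
    rcases eq_or_ne a ⟨i, hi⟩ with rfl | ha
    · simp
    · have hai : (a : Fin n) ≠ i := fun h => ha (Subtype.ext h)
      simp [updateCol_ne ha, Equiv.swap_apply_of_ne_of_ne hai (ne_of_mem_of_not_mem a.2 hj)]
  rw [hcol]
  rfl

end Columns

theorem stmt_18_general (d n : ℕ)
    (V : Matrix (Fin d) (Fin n) ℝ) (Shat : Finset (Fin n))
    (hlin : LinearIndependent ℝ (fun i : {x // x ∈ Shat} => (fun a => V a i.1)))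
    (X P : Matrix (Fin d) (Fin d) ℝ)
    (hX : X = ∑ i ∈ Shat, vecMulVec (fun a => V a i) (fun a => V a i))
    (hP : IsPseudoInv X P)
    (hloc : ∀ i ∈ Shat, ∀ j ∉ Shat,
      (subSub (Vᵀ * V) (insert j (Shat.erase i))).det ≠ 0 →
      Matrix.trace (subSub (Vᵀ * V) Shat)⁻¹ ≤
        Matrix.trace (subSub (Vᵀ * V) (insert j (Shat.erase i)))⁻¹) :
    ∀ i ∈ Shat, ∀ j ∉ Shat,
      ((fun a => V a i) ⬝ᵥ ((P * P * P) *ᵥ fun a => V a i)) *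
          ((fun a => V a j) ⬝ᵥ ((1 - P * X) *ᵥ fun a => V a j))
        ≤ ((fun a => V a i) ⬝ᵥ ((P * P) *ᵥ fun a => V a i))
          + ((fun a => V a i) ⬝ᵥ ((P * P) *ᵥ fun a => V a i)) *
              ((fun a => V a j) ⬝ᵥ (P *ᵥ fun a => V a j))
          - 2 * ((fun a => V a i) ⬝ᵥ ((P * P) *ᵥ fun a => V a j)) *
              ((fun a => V a i) ⬝ᵥ (P *ᵥ fun a => V a j)) := by
  intro i hi j hj
  obtain ⟨τ, hτ⟩ := exists_equiv_subSub_insert_erase V hi hj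
  obtain rfl : X = _ := hX.trans (sum_vecMulVec_col_eq V Shat)
  refine exchange_inequality_of_trace_inv_le hlin hP ⟨i, hi⟩ (V.col j) fun hdet => ?_
  have hopt := hloc i hi j hj (by rwa [← det_submatrix_equiv_self τ, hτ])
  rwa [← trace_inv_submatrix_equiv_self τ, hτ, subSub_transpose_mul] at hopt

/-- If `Ŝ` is locally optimal for A-MESP, then for every `i ∈ Ŝ` and
`j ∉ Ŝ`: `(vᵢᵀP³vᵢ)·vⱼᵀ(I − PX)vⱼ ≤ vᵢᵀP²vᵢ + (vᵢᵀP²vᵢ)(vⱼᵀPvⱼ) − 2(vᵢᵀP²vⱼ)(vᵢᵀPvⱼ)`,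
where `X = ∑_{ℓ∈Ŝ} v_ℓ v_ℓᵀ` and `P = X†`. -/
theorem stmt_18 (d n s : ℕ) (hs1 : 1 ≤ s) (hsd : s ≤ d)
    (V : Matrix (Fin d) (Fin n) ℝ) (Shat : Finset (Fin n)) (hcard : Shat.card = s)
    (hlin : LinearIndependent ℝ (fun i : {x // x ∈ Shat} => (fun a => V a i.1)))
    (X P : Matrix (Fin d) (Fin d) ℝ)
    (hX : X = ∑ i ∈ Shat, vecMulVec (fun a => V a i) (fun a => V a i))
    (hP : IsPseudoInv X P)
    (hloc : ∀ i ∈ Shat, ∀ j ∉ Shat,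
      (subSub (Vᵀ * V) (insert j (Shat.erase i))).det ≠ 0 →
      Matrix.trace (subSub (Vᵀ * V) Shat)⁻¹ ≤
        Matrix.trace (subSub (Vᵀ * V) (insert j (Shat.erase i)))⁻¹) :
    ∀ i ∈ Shat, ∀ j ∉ Shat,
      ((fun a => V a i) ⬝ᵥ ((P * P * P) *ᵥ fun a => V a i)) *
          ((fun a => V a j) ⬝ᵥ ((1 - P * X) *ᵥ fun a => V a j))
        ≤ ((fun a => V a i) ⬝ᵥ ((P * P) *ᵥ fun a => V a i))
          + ((fun a => V a i) ⬝ᵥ ((P * P) *ᵥ fun a => V a i)) *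
              ((fun a => V a j) ⬝ᵥ (P *ᵥ fun a => V a j))
          - 2 * ((fun a => V a i) ⬝ᵥ ((P * P) *ᵥ fun a => V a j)) *
              ((fun a => V a i) ⬝ᵥ (P *ᵥ fun a => V a j)) :=
  stmt_18_general d n V Shat hlin X P hX hP hloc
end
end

section
/- Let C = VᵀV be an n×n real positive semidefinite matrix, where V is a d×n real matrix with columns v_1,…,v_n, and let s be an integer with 1 ≤ s ≤ d. Assume δ := min_{|T|=s} λ_min(C_{T,T}) > 0 and let λ_max(C) denote the largest eigenvalue of C. Let Ŝ ⊆ {1,…,n} with |Ŝ| = s be locally optimal for A-MESP: for every i ∈ Ŝ and j ∈ {1,…,n}∖Ŝ, tr(C_{T,T}^{-1}) ≥ tr(C_{Ŝ,Ŝ}^{-1}) where T = Ŝ∪{j}∖{i}. Then for every subset S ⊆ {1,…,n} with |S| = s, tr(C_{Ŝ,Ŝ}^{-1}) ≤ min{ (s/2)·(1 + λ_max(C)/δ), (1/2)·(n + s + (n−s)·λ_max(C)/δ) } · tr(C_{S,S}^{-1}). (That is, the local search algorithm yields a min{(s/2)(1+λ_max(C)/δ), (1/2)(n+s+(n−s)λ_max(C)/δ)}-approximation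 ratio for A-MESP.) -/
open Matrix Finset

noncomputable section

/-!
Every eigenvalue of a principal submatrix `C_{T,T}` with `|T| = s` lies in `[δ, L]`, so
`tr C_{T,T}⁻¹ ∈ [s/L, s/δ]`: any two such traces are within a factor `L/δ` of each other, and
`L/δ` is below the claimed ratio once `s ≥ 2` and `n ≥ s + 2`. In the remaining cases
(`s = 1` or `n ≤ s + 1`) every `S` is `Ŝ` or one swap away from it, so local optimality gives
`tr C_{Ŝ,Ŝ}⁻¹ ≤ tr C_{S,S}⁻¹` directly, and the ratio is at least `1`.
-/

namespace Matrix

variable {m n R : Type*} [Fintype m] [Fintype n]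

lemma extend_zero_dotProduct [CommSemiring R] {e : m → n} (he : e.Injective) (x : m → R)
    (w : n → R) : Function.extend e x 0 ⬝ᵥ w = x ⬝ᵥ (w ∘ e) := by
  classical
  rw [dotProduct, ← sum_subset (subset_univ (univ.map ⟨e, he⟩)), sum_map]
  · simp [dotProduct, he.extend_apply]
  · intro j _ hj
    rw [Function.extend_apply' _ _ _ (by simpa using hj)]
    simp

lemma dotProduct_submatrix_mulVec [CommSemiring R] {e : m → n} (he : e.Injective)
    (A : Matrix n n R) (y : m → R) :
    y ⬝ᵥ (A.submatrix e e *ᵥ y) = Function.extend e y 0 ⬝ᵥ (A *ᵥ Function.extend e y 0) := by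
  rw [extend_zero_dotProduct he]
  congr 1
  ext i
  simp only [mulVec, Function.comp_apply]
  rw [dotProduct_comm (fun j => A (e i) j), extend_zero_dotProduct he, dotProduct_comm]
  rfl

lemma dotProduct_submatrix_mulVec_le {e : m → n} (he : e.Injective) {A : Matrix n n ℝ} {L : ℝ}
    (hL : ∀ y, y ⬝ᵥ (A *ᵥ y) ≤ L * (y ⬝ᵥ y)) (y : m → ℝ) :
    y ⬝ᵥ (A.submatrix e e *ᵥ y) ≤ L * (y ⬝ᵥ y) := by
  have hself : Function.extend e y 0 ⬝ᵥ Function.extend e y 0 = y ⬝ᵥ y := by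
    rw [extend_zero_dotProduct he]
    congr 1
    ext i
    exact he.extend_apply _ _ i
  rw [dotProduct_submatrix_mulVec he, ← hself]
  exact hL _

lemma le_of_forall_dotProduct_mulVec_bounds [Nonempty m] {A : Matrix m m ℝ} {δ L : ℝ}
    (hlow : ∀ y, δ * (y ⬝ᵥ y) ≤ y ⬝ᵥ (A *ᵥ y)) (hup : ∀ y, y ⬝ᵥ (A *ᵥ y) ≤ L * (y ⬝ᵥ y)) :
    δ ≤ L := by
  classical
  obtain ⟨i⟩ := ‹Nonempty m›
  simpa using (hlow (Pi.single i 1)).trans (hup (Pi.single i 1))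

namespace IsHermitian

variable [DecidableEq m] {A : Matrix m m ℝ} (hA : A.IsHermitian)

lemma eigenvalues_eq_dotProduct (i : m) :
    hA.eigenvalues i = hA.eigenvectorBasis i ⬝ᵥ (A *ᵥ hA.eigenvectorBasis i) := by
  simpa using hA.eigenvalues_eq i

lemma dotProduct_eigenvectorBasis_self (i : m) :
    hA.eigenvectorBasis i ⬝ᵥ hA.eigenvectorBasis i = 1 := by
  have h := real_inner_self_eq_norm_sq (hA.eigenvectorBasis i)
  rw [hA.eigenvectorBasis.orthonormal.1 i, EuclideanSpace.inner_eq_star_dotProduct] at h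
  simpa using h

lemma le_eigenvalues {δ : ℝ} (h : ∀ y, δ * (y ⬝ᵥ y) ≤ y ⬝ᵥ (A *ᵥ y)) (i : m) :
    δ ≤ hA.eigenvalues i := by
  simpa [hA.eigenvalues_eq_dotProduct, hA.dotProduct_eigenvectorBasis_self] using
    h (hA.eigenvectorBasis i)

lemma eigenvalues_le {L : ℝ} (h : ∀ y, y ⬝ᵥ (A *ᵥ y) ≤ L * (y ⬝ᵥ y)) (i : m) :
    hA.eigenvalues i ≤ L := by
  simpa [hA.eigenvalues_eq_dotProduct, hA.dotProduct_eigenvectorBasis_self] using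
    h (hA.eigenvectorBasis i)

lemma trace_cfc (f : ℝ → ℝ) : (cfc f A).trace = ∑ i, f (hA.eigenvalues i) := by
  rw [hA.cfc_eq, IsHermitian.cfc, Unitary.conjStarAlgAut_apply, trace_mul_cycle,
    Unitary.coe_star_mul_self, one_mul, trace_diagonal]
  simp

lemma trace_inv (h : IsUnit A) : A⁻¹.trace = ∑ i, (hA.eigenvalues i)⁻¹ := by
  rw [nonsing_inv_eq_ringInverse, ← cfc_ringInverse_id (R := ℝ) A h, hA.trace_cfc]

lemma trace_inv_mem_Icc {δ L : ℝ} (hδ : 0 < δ) (h : ∀ i, hA.eigenvalues i ∈ Set.Icc δ L) :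
    A⁻¹.trace ∈ Set.Icc (Fintype.card m / L) (Fintype.card m / δ) := by
  have hpos i : 0 < hA.eigenvalues i := hδ.trans_le (h i).1
  have hunit : IsUnit A := (hA.posDef_iff_eigenvalues_pos.mpr hpos).isUnit
  rw [hA.trace_inv hunit, div_eq_mul_inv, div_eq_mul_inv, ← nsmul_eq_mul, ← nsmul_eq_mul,
    ← card_univ, ← sum_const, ← sum_const]
  exact ⟨sum_le_sum fun i _ => inv_anti₀ (hpos i) (h i).2,
    sum_le_sum fun i _ => inv_anti₀ hδ (h i).1⟩

end IsHermitian

end Matrix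

lemma trace_inv_subSub_mem_Icc {n : ℕ} {C : Matrix (Fin n) (Fin n) ℝ} (hC : C.IsHermitian)
    {δ L : ℝ} (hδ : 0 < δ) {T : Finset (Fin n)}
    (hlow : ∀ y, δ * (y ⬝ᵥ y) ≤ y ⬝ᵥ (subSub C T *ᵥ y))
    (hup : ∀ y, y ⬝ᵥ (C *ᵥ y) ≤ L * (y ⬝ᵥ y)) :
    (subSub C T)⁻¹.trace ∈ Set.Icc (#T / L) (#T / δ) := by
  have hT : (subSub C T).IsHermitian := hC.submatrix Subtype.val
  simpa using hT.trace_inv_mem_Icc hδ fun i => ⟨hT.le_eigenvalues hlow i,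
    hT.eigenvalues_le (dotProduct_submatrix_mulVec_le Subtype.val_injective hup) i⟩

namespace Finset

variable {α : Type*} [DecidableEq α]

lemma card_sdiff_le_one_of_card_eq [Fintype α] {s t : Finset α} {k : ℕ} (hs : #s = k)
    (ht : #t = k) (hk : k ≤ 1 ∨ Fintype.card α ≤ k + 1) : #(s \ t) ≤ 1 := by
  have := card_sdiff_add_card s t
  have := card_le_univ (s ∪ t)
  have := card_le_card (sdiff_subset : s \ t ⊆ s)
  omega

lemma eq_or_eq_insert_erase_of_card_sdiff_le_one {s t : Finset α} (hst : #s = #t)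
    (h : #(s \ t) ≤ 1) : t = s ∨ ∃ i ∈ s, ∃ j ∉ s, t = insert j (s.erase i) := by
  rcases Nat.le_one_iff_eq_zero_or_eq_one.mp h with h0 | h1
  · left
    exact (eq_of_subset_of_card_le (sdiff_eq_empty_iff_subset.mp (card_eq_zero.mp h0))
      hst.ge).symm
  · right
    obtain ⟨i, hi⟩ := card_eq_one.mp h1
    obtain ⟨j, hj⟩ := card_eq_one.mp ((card_sdiff_comm hst).symm.trans h1)
    simp only [Finset.ext_iff, mem_sdiff, mem_singleton] at hi hj
    refine ⟨i, ((hi i).2 rfl).1, j, ((hj j).2 rfl).2, ?_⟩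
    ext x
    simp only [mem_insert, mem_erase]
    grind

end Finset

def localSearchRatio (n s : ℕ) (δ L : ℝ) : ℝ :=
  min ((s : ℝ) / 2 * (1 + L / δ)) (1 / 2 * ((n : ℝ) + s + ((n : ℝ) - s) * L / δ))

lemma one_le_localSearchRatio {n s : ℕ} {δ L : ℝ} (hδ : 0 < δ) (hδL : δ ≤ L) (hs : 1 ≤ s)
    (hsn : s ≤ n) : 1 ≤ localSearchRatio n s δ L := by
  have hr : 1 ≤ L / δ := (one_le_div hδ).mpr hδL
  have hs' : (1 : ℝ) ≤ s := by exact_mod_cast hs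
  have hsn' : (s : ℝ) ≤ n := by exact_mod_cast hsn
  rw [localSearchRatio, le_min_iff, mul_div_assoc]
  constructor <;> nlinarith

lemma div_le_localSearchRatio {n s : ℕ} {δ L : ℝ} (hδ : 0 < δ) (hδL : δ ≤ L) (hs : 2 ≤ s)
    (hsn : s + 2 ≤ n) : L / δ ≤ localSearchRatio n s δ L := by
  have hr : 1 ≤ L / δ := (one_le_div hδ).mpr hδL
  have hs' : (2 : ℝ) ≤ s := by exact_mod_cast hs
  have hsn' : (s : ℝ) + 2 ≤ n := by exact_mod_cast hsn
  rw [localSearchRatio, le_min_iff, mul_div_assoc]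
  constructor <;> nlinarith

theorem stmt_19_general (d n s : ℕ) (hs1 : 1 ≤ s)
    (V : Matrix (Fin d) (Fin n) ℝ)
    (δ L : ℝ) (hδpos : 0 < δ)
    (hδ : ∀ T : Finset (Fin n), T.card = s → ∀ y : {x // x ∈ T} → ℝ,
      δ * (y ⬝ᵥ y) ≤ y ⬝ᵥ (subSub (Vᵀ * V) T *ᵥ y))
    (hL : ∀ y : Fin n → ℝ, y ⬝ᵥ ((Vᵀ * V) *ᵥ y) ≤ L * (y ⬝ᵥ y))
    (Shat : Finset (Fin n)) (hcard : Shat.card = s)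
    (hloc : ∀ i ∈ Shat, ∀ j ∉ Shat,
      Matrix.trace (subSub (Vᵀ * V) Shat)⁻¹ ≤
        Matrix.trace (subSub (Vᵀ * V) (insert j (Shat.erase i)))⁻¹) :
    ∀ S : Finset (Fin n), S.card = s →
      Matrix.trace (subSub (Vᵀ * V) Shat)⁻¹ ≤
        min ((s : ℝ) / 2 * (1 + L / δ))
            (1 / 2 * ((n : ℝ) + s + ((n : ℝ) - s) * L / δ)) *
          Matrix.trace (subSub (Vᵀ * V) S)⁻¹ := by
  intro S hS
  have hC : (Vᵀ * V).IsHermitian := by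
    simpa [conjTranspose_eq_transpose_of_trivial] using isHermitian_conjTranspose_mul_self V
  have htrace (T : Finset (Fin n)) (hT : #T = s) :=
    hT ▸ trace_inv_subSub_mem_Icc hC hδpos (hδ T hT) hL
  have hδL : δ ≤ L := by
    have : Nonempty Shat := (card_pos.mp (hcard ▸ hs1)).to_subtype
    exact le_of_forall_dotProduct_mulVec_bounds (hδ Shat hcard)
      (dotProduct_submatrix_mulVec_le Subtype.val_injective hL)
  have hLpos : 0 < L := hδpos.trans_le hδL
  have hS_nonneg : 0 ≤ (subSub (Vᵀ * V) S)⁻¹.trace := le_trans (by positivity) (htrace S hS).1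
  change _ ≤ localSearchRatio n s δ L * _
  by_cases hlarge : 2 ≤ s ∧ s + 2 ≤ n
  · calc (subSub (Vᵀ * V) Shat)⁻¹.trace ≤ s / δ := (htrace Shat hcard).2
      _ = L / δ * (s / L) := by field_simp
      _ ≤ L / δ * (subSub (Vᵀ * V) S)⁻¹.trace := by gcongr; exact (htrace S hS).1
      _ ≤ _ := by gcongr; exact div_le_localSearchRatio hδpos hδL hlarge.1 hlarge.2
  · have hsn : s ≤ n := by simpa [hcard] using card_le_univ Shat
    have hswap : (subSub (Vᵀ * V) Shat)⁻¹.trace ≤ (subSub (Vᵀ * V) S)⁻¹.trace := by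
      rcases eq_or_eq_insert_erase_of_card_sdiff_le_one (hcard.trans hS.symm)
          (card_sdiff_le_one_of_card_eq hcard hS (by simp only [Fintype.card_fin]; omega)) with
        rfl | ⟨i, hi, j, hj, rfl⟩
      · rfl
      · exact hloc i hi j hj
    calc (subSub (Vᵀ * V) Shat)⁻¹.trace ≤ 1 * (subSub (Vᵀ * V) S)⁻¹.trace := by rwa [one_mul]
      _ ≤ _ := by gcongr; exact one_le_localSearchRatio hδpos hδL hs1 hsn

/-- A locally optimal `Ŝ` for A-MESP satisfies, for every size-`s` subset
`S`: `tr(C_{Ŝ,Ŝ}⁻¹) ≤ min{(s/2)(1 + L/δ), (1/2)(n + s + (n−s)L/δ)} · tr(C_{S,S}⁻¹)`, where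
`δ > 0` is (a lower bound on) `min_{|T|=s} λ_min(C_{T,T})` and `L` is (an upper bound on)
`λ_max(C)`, both expressed through quadratic forms. -/
theorem stmt_19 (d n s : ℕ) (hs1 : 1 ≤ s) (hsd : s ≤ d)
    (V : Matrix (Fin d) (Fin n) ℝ)
    (δ L : ℝ) (hδpos : 0 < δ)
    (hδ : ∀ T : Finset (Fin n), T.card = s → ∀ y : {x // x ∈ T} → ℝ,
      δ * (y ⬝ᵥ y) ≤ y ⬝ᵥ (subSub (Vᵀ * V) T *ᵥ y))
    (hL : ∀ y : Fin n → ℝ, y ⬝ᵥ ((Vᵀ * V) *ᵥ y) ≤ L * (y ⬝ᵥ y))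
    (Shat : Finset (Fin n)) (hcard : Shat.card = s)
    (hloc : ∀ i ∈ Shat, ∀ j ∉ Shat,
      Matrix.trace (subSub (Vᵀ * V) Shat)⁻¹ ≤
        Matrix.trace (subSub (Vᵀ * V) (insert j (Shat.erase i)))⁻¹) :
    ∀ S : Finset (Fin n), S.card = s →
      Matrix.trace (subSub (Vᵀ * V) Shat)⁻¹ ≤
        min ((s : ℝ) / 2 * (1 + L / δ))
            (1 / 2 * ((n : ℝ) + s + ((n : ℝ) - s) * L / δ)) *
          Matrix.trace (subSub (Vᵀ * V) S)⁻¹ :=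
  stmt_19_general d n s hs1 V δ L hδpos hδ hL Shat hcard hloc
end
end
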